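/- If X is a Gaussian random variable with mean μ and variance 1, |μ| ≤ M, and k ≤ M², then E[H_k(X)²] ≤ (2M²)^k, where H_k is the Hermite polynomial of degree k. -/

import Mathlib

open MeasureTheory ProbabilityTheory Polynomial

open Real
open scoped NNReal

/-!
Write `T m n = E[H_m(X) H_n(X)]` (`hermiteMoment μ m n`). Gaussian integration by parts
(Stein's identity `E[X p(X)] = μ E[p(X)] + E[p'(X)]` for polynomials `p`), together with
`H_{m+1} = X H_m - H_m'` and `H_n' = n H_{n-1}`, gives the recursion
`T (m+1) n = μ T m n + n T m (n-1)`, and `T 0 n = μ^n`. Since `|μ| ≤ M`, induction on `m`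
yields `|T m (m+j)| ≤ M^j (M² + m + j)^m`; for `j = 0` and `k ≤ M²` this is
`E[H_k(X)²] = T k k ≤ (M² + k)^k ≤ (2M²)^k`.
-/

namespace Polynomial

theorem derivative_hermite (n : ℕ) : derivative (hermite n) = n * hermite (n - 1) := by
  induction n with
  | zero => simp
  | succ n ih =>
    rw [hermite_succ, derivative_sub, derivative_mul, derivative_X, ih, add_tsub_cancel_right]
    rcases n with _ | n
    · simp
    · rw [hermite_succ, derivative_mul, add_tsub_cancel_right]
      simp only [derivative_natCast]
      push_cast
      ring

end Polynomial

namespace ProbabilityTheory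

lemma hasDerivAt_gaussianPDFReal (μ : ℝ) (v : ℝ≥0) (x : ℝ) :
    HasDerivAt (gaussianPDFReal μ v) (-((x - μ) / v) * gaussianPDFReal μ v x) x := by
  have hexp : HasDerivAt (fun y ↦ -(y - μ) ^ 2 / (2 * v)) (-((x - μ) / v)) x := by
    refine ((((hasDerivAt_id' x).sub_const μ).pow 2).neg.div_const (2 * (v : ℝ))).congr_deriv ?_
    push_cast
    ring
  rw [gaussianPDFReal_def]
  exact (hexp.exp.const_mul (√(2 * π * v))⁻¹).congr_deriv (by ring)

lemma integrable_gaussianPDFReal_smul_iff {E : Type*} [NormedAddCommGroup E] [NormedSpace ℝ E]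
    {μ : ℝ} {v : ℝ≥0} (hv : v ≠ 0) {f : ℝ → E} :
    Integrable (fun x ↦ gaussianPDFReal μ v x • f x) ↔ Integrable f (gaussianReal μ v) := by
  rw [gaussianReal_of_var_ne_zero μ hv, integrable_withDensity_iff_integrable_smul'
    (measurable_gaussianPDF μ v) (ae_of_all _ fun _ ↦ gaussianPDF_lt_top)]
  simp only [toReal_gaussianPDF]

variable {R : Type*} [CommSemiring R] [Algebra R ℝ]

lemma integrable_aeval_gaussianReal (μ : ℝ) (v : ℝ≥0) (q : R[X]) :
    Integrable (fun x ↦ aeval x q) (gaussianReal μ v) := by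
  simp only [aeval_eq_sum_range, Algebra.smul_def]
  refine integrable_finsetSum _ fun i _ ↦ Integrable.const_mul ?_ _
  have h := (memLp_id_gaussianReal (μ := μ) (v := v) i).integrable_norm_pow'
  exact (integrable_norm_iff (by fun_prop)).1 (by simpa [norm_pow] using h)

lemma integrable_mul_aeval_gaussianReal (μ : ℝ) (v : ℝ≥0) (q : R[X]) :
    Integrable (fun x ↦ x * aeval x q) (gaussianReal μ v) :=
  (integrable_aeval_gaussianReal μ v (X * q)).congr (ae_of_all _ fun x ↦ by simp)

lemma integrable_sub_mul_aeval_gaussianReal (μ : ℝ) (v : ℝ≥0) (q : R[X]) :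
    Integrable (fun x ↦ (x - μ) * aeval x q) (gaussianReal μ v) :=
  ((integrable_mul_aeval_gaussianReal μ v q).sub
    ((integrable_aeval_gaussianReal μ v q).const_mul μ)).congr
    (ae_of_all _ fun x ↦ (sub_mul x μ _).symm)

lemma integral_sub_mul_aeval_gaussianReal (μ : ℝ) {v : ℝ≥0} (hv : v ≠ 0) (q : R[X]) :
    ∫ x, (x - μ) * aeval x q ∂gaussianReal μ v =
      v * ∫ x, aeval x (derivative q) ∂gaussianReal μ v := by
  have hpdf (f : ℝ → ℝ) (hf : Integrable f (gaussianReal μ v)) :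
      Integrable (fun x ↦ gaussianPDFReal μ v x * f x) :=
    (integrable_gaussianPDFReal_smul_iff hv).2 hf
  have ibp : ∫ x, aeval x q * (-((x - μ) / v) * gaussianPDFReal μ v x) =
      -∫ x, aeval x (derivative q) * gaussianPDFReal μ v x :=
    integral_mul_deriv_eq_deriv_mul_of_integrable
      (fun x _ ↦ q.hasDerivAt_aeval x) (fun x _ ↦ hasDerivAt_gaussianPDFReal μ v x)
      ((hpdf _ ((integrable_sub_mul_aeval_gaussianReal μ v q).const_mul (-(v : ℝ)⁻¹))).congr
        (ae_of_all _ fun x ↦ by simp only [Pi.mul_apply]; ring))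
      ((hpdf _ (integrable_aeval_gaussianReal μ v (derivative q))).congr
        (ae_of_all _ fun x ↦ mul_comm _ _))
      ((hpdf _ (integrable_aeval_gaussianReal μ v q)).congr (ae_of_all _ fun x ↦ mul_comm _ _))
  have hv' : (v : ℝ) ≠ 0 := by exact_mod_cast hv
  simp only [integral_gaussianReal_eq_integral_smul hv, smul_eq_mul]
  calc ∫ x, gaussianPDFReal μ v x * ((x - μ) * aeval x q)
      = -v * ∫ x, aeval x q * (-((x - μ) / v) * gaussianPDFReal μ v x) := by
        rw [← integral_const_mul]
        congr 1 with x
        field_simp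
    _ = v * ∫ x, gaussianPDFReal μ v x * aeval x (derivative q) := by
        rw [ibp, ← integral_neg, ← integral_const_mul, ← integral_const_mul]
        congr 1 with x
        ring

lemma integral_mul_aeval_gaussianReal (μ : ℝ) {v : ℝ≥0} (hv : v ≠ 0) (q : R[X]) :
    ∫ x, x * aeval x q ∂gaussianReal μ v =
      μ * ∫ x, aeval x q ∂gaussianReal μ v
        + v * ∫ x, aeval x (derivative q) ∂gaussianReal μ v := by
  rw [← integral_sub_mul_aeval_gaussianReal μ hv, ← integral_const_mul, ← integral_add
    ((integrable_aeval_gaussianReal μ v q).const_mul μ)]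
  · congr 1 with x
    ring
  · exact integrable_sub_mul_aeval_gaussianReal μ v q

noncomputable def hermiteMoment (μ : ℝ) (m n : ℕ) : ℝ :=
  ∫ x, aeval x (hermite m * hermite n) ∂gaussianReal μ 1

lemma hermiteMoment_comm (μ : ℝ) (m n : ℕ) : hermiteMoment μ m n = hermiteMoment μ n m := by
  rw [hermiteMoment, hermiteMoment, mul_comm]

lemma hermiteMoment_succ_left (μ : ℝ) (m n : ℕ) :
    hermiteMoment μ (m + 1) n = μ * hermiteMoment μ m n + n * hermiteMoment μ m (n - 1) := by
  have hint (q : ℤ[X]) := integrable_aeval_gaussianReal μ 1 q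
  have hstein := integral_mul_aeval_gaussianReal μ one_ne_zero (hermite m * hermite n)
  simp only [NNReal.coe_one, one_mul, derivative_mul, map_add] at hstein
  rw [integral_add (hint _) (hint _)] at hstein
  unfold hermiteMoment
  calc ∫ x, aeval x (hermite (m + 1) * hermite n) ∂gaussianReal μ 1
      = ∫ x, x * aeval x (hermite m * hermite n) ∂gaussianReal μ 1
          - ∫ x, aeval x (derivative (hermite m) * hermite n) ∂gaussianReal μ 1 := by
        rw [← integral_sub (integrable_mul_aeval_gaussianReal μ 1 _) (hint _)]
        congr 1 with x
        simp only [hermite_succ, map_mul, map_sub, aeval_X]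
        ring
    _ = μ * ∫ x, aeval x (hermite m * hermite n) ∂gaussianReal μ 1
          + ∫ x, aeval x (hermite m * derivative (hermite n)) ∂gaussianReal μ 1 := by
        rw [hstein]
        ring
    _ = _ := by
        congr 1
        rw [derivative_hermite, ← integral_const_mul]
        congr 1 with x
        simp only [map_mul, map_natCast]
        ring

lemma hermiteMoment_zero_right (μ : ℝ) (m : ℕ) : hermiteMoment μ m 0 = μ ^ m := by
  induction m with
  | zero => simp [hermiteMoment]
  | succ m ih =>
    rw [hermiteMoment_succ_left, ih, Nat.cast_zero, zero_mul, add_zero, pow_succ, mul_comm]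

lemma abs_hermiteMoment_le {μ M : ℝ} (hμ : |μ| ≤ M) (m j : ℕ) :
    |hermiteMoment μ m (m + j)| ≤ M ^ j * (M ^ 2 + m + j) ^ m := by
  have hM : 0 ≤ M := (abs_nonneg μ).trans hμ
  induction m generalizing j with
  | zero =>
    rw [zero_add, hermiteMoment_comm, hermiteMoment_zero_right, abs_pow, pow_zero, mul_one]
    exact pow_le_pow_left₀ (abs_nonneg μ) hμ j
  | succ m ih =>
    obtain ⟨A, hA⟩ : ∃ A : ℝ, A = M ^ 2 + (m + 1 : ℕ) + j := ⟨_, rfl⟩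
    have h₁ : |hermiteMoment μ m (m + 1 + j)| ≤ M ^ (j + 1) * A ^ m := by
      rw [show m + 1 + j = m + (j + 1) by omega, show A = M ^ 2 + m + (j + 1 : ℕ) by
        rw [hA]; push_cast; ring]
      exact ih (j + 1)
    have h₂ : |hermiteMoment μ m (m + j)| ≤ M ^ j * A ^ m :=
      (ih j).trans (by rw [hA]; gcongr; exact_mod_cast m.le_succ)
    have hrec := hermiteMoment_succ_left μ m (m + 1 + j)
    rw [show m + 1 + j - 1 = m + j by omega] at hrec
    calc |hermiteMoment μ (m + 1) (m + 1 + j)|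
        ≤ |μ| * |hermiteMoment μ m (m + 1 + j)|
            + (m + 1 + j : ℕ) * |hermiteMoment μ m (m + j)| := by
          rw [hrec]
          exact (abs_add_le _ _).trans_eq (by rw [abs_mul, abs_mul, Nat.abs_cast])
      _ ≤ M * (M ^ (j + 1) * A ^ m) + (m + 1 + j : ℕ) * (M ^ j * A ^ m) := by gcongr
      _ = M ^ j * (M ^ 2 + (m + 1 : ℕ) + j) ^ (m + 1) := by
          rw [hA]
          push_cast
          ring

end ProbabilityTheory

/-- If `X ~ N(μ, 1)`, `|μ| ≤ M` and `k ≤ M ^ 2`, then `E[H_k(X)²] ≤ (2 M²)^k`, where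
`H_k` is the probabilists' Hermite polynomial of degree `k`. -/
theorem expectation_hermite_sq_gaussian_le (μ M : ℝ) (k : ℕ)
    (hμ : |μ| ≤ M) (hk : (k : ℝ) ≤ M ^ 2) :
    ∫ x, (aeval x (hermite k) : ℝ) ^ 2 ∂(gaussianReal μ 1) ≤ (2 * M ^ 2) ^ k := by
  have hmoment :
      ∫ x, (aeval x (hermite k) : ℝ) ^ 2 ∂(gaussianReal μ 1) = hermiteMoment μ k k := by
    simp only [hermiteMoment, map_mul, sq]
  calc ∫ x, (aeval x (hermite k) : ℝ) ^ 2 ∂(gaussianReal μ 1)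
      ≤ |hermiteMoment μ k (k + 0)| := hmoment.trans_le (le_abs_self _)
    _ ≤ (M ^ 2 + k) ^ k := by simpa using abs_hermiteMoment_le hμ k 0
    _ ≤ (2 * M ^ 2) ^ k := by gcongr; linarith
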